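/- Let P_1,...,P_n be positive diagonal independent commuting n-qubit Pauli operators (i.e. P_k = Z^{a_k} for linearly independent bit-strings a_k ∈ F_2^n), and let C be an n-qubit Clifford unitary. If exp(iπP_1/8)···exp(iπP_n/8) = exp(iπZ_1/8)···exp(iπZ_n/8)·C up to a global phase, then {P_1,...,P_n} = {Z_1,...,Z_n} as sets and C is the identity up to a global phase. -/

import Mathlib

open Complex Matrix
noncomputable section

/-- Single-qubit Pauli matrices I, X, Y, Z. -/
def P1 : Fin 4 → Matrix (Fin 2) (Fin 2) ℂ
  | 0 => 1
  | 1 => !![0, 1; 1, 0]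
  | 2 => !![0, -Complex.I; Complex.I, 0]
  | 3 => !![1, 0; 0, -1]

/-- n-qubit Pauli operator indexed by `v : Fin n → Fin 4` (tensor product of single-qubit Paulis). -/
def Pauli {n : ℕ} (v : Fin n → Fin 4) : Matrix (Fin n → Fin 2) (Fin n → Fin 2) ℂ :=
  fun x y => ∏ i, P1 (v i) (x i) (y i)

/-- A Clifford unitary: a unitary mapping every (Hermitian) Pauli to a signed Pauli by conjugation. -/
def IsClifford {n : ℕ} (C : Matrix (Fin n → Fin 2) (Fin n → Fin 2) ℂ) : Prop :=
  C ∈ Matrix.unitaryGroup (Fin n → Fin 2) ℂ ∧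
    ∀ v : Fin n → Fin 4, ∃ w : Fin n → Fin 4, ∃ ε : ℂ,
      (ε = 1 ∨ ε = -1) ∧ C * Pauli v * Cᴴ = ε • Pauli w

/-- exp(iπP/8) for a Pauli P. -/
def pexp {n : ℕ} (v : Fin n → Fin 4) : Matrix (Fin n → Fin 2) (Fin n → Fin 2) ℂ :=
  NormedSpace.exp ((Complex.I * (Real.pi / 8 : ℝ)) • Pauli v)

/-- exp(-iπP/8) for a Pauli P. -/
def pexpNeg {n : ℕ} (v : Fin n → Fin 4) : Matrix (Fin n → Fin 2) (Fin n → Fin 2) ℂ :=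
  NormedSpace.exp (-((Complex.I * (Real.pi / 8 : ℝ)) • Pauli v))

/-- Pauli X on qubit j. -/
def xAt {n : ℕ} (j : Fin n) : Fin n → Fin 4 := fun i => if i = j then 1 else 0

/-- Pauli Z on qubit j. -/
def zAt {n : ℕ} (j : Fin n) : Fin n → Fin 4 := fun i => if i = j then 3 else 0

/-- Z^a for a bit-string a given as booleans. -/
def zOf {n : ℕ} (a : Fin n → Bool) : Fin n → Fin 4 := fun i => if a i then 3 else 0

/-- Z^a for a bit-string a ∈ F_2^n. -/
def zOfZ {n : ℕ} (a : Fin n → ZMod 2) : Fin n → Fin 4 := fun i => if a i = 1 then 3 else 0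

/-- The tuple of Paulis pairwise commutes. -/
def PComm {n m : ℕ} (P : Fin m → Fin n → Fin 4) : Prop :=
  ∀ i j, Commute (Pauli (P i)) (Pauli (P j))

/-- Independence: no P_j equals a product of a subset of the others, up to sign. -/
def Indep {n m : ℕ} (P : Fin m → Fin n → Fin 4) : Prop :=
  ∀ j : Fin m, ∀ S : Finset (Fin m), j ∉ S → ∀ ε : ℂ, (ε = 1 ∨ ε = -1) →
    Pauli (P j) ≠ ε • (S.toList.map (fun i => Pauli (P i))).prod

/-- The product exp(iπP₁/8)···exp(iπP_m/8). -/
def expProd {n m : ℕ} (P : Fin m → Fin n → Fin 4) :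
    Matrix (Fin n → Fin 2) (Fin n → Fin 2) ℂ :=
  ((List.finRange m).map (fun j => pexp (P j))).prod

/-- Equality up to a global phase. -/
def PhaseEq {n : ℕ} (A B : Matrix (Fin n → Fin 2) (Fin n → Fin 2) ℂ) : Prop :=
  ∃ c : ℂ, ‖c‖ = 1 ∧ A = c • B

/-- The channel representation entry, as a complex number. -/
def chanC {n : ℕ} (U : Matrix (Fin n → Fin 2) (Fin n → Fin 2) ℂ)
    (P Q : Fin n → Fin 4) : ℂ :=
  ((2 : ℂ) ^ n)⁻¹ * Matrix.trace (Pauli P * U * Pauli Q * Uᴴ)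

/-- The channel representation: real 4^n × 4^n matrix. -/
def chan {n : ℕ} (U : Matrix (Fin n → Fin 2) (Fin n → Fin 2) ℂ) :
    Matrix (Fin n → Fin 4) (Fin n → Fin 4) ℝ :=
  fun P Q => (chanC U P Q).re

/-- All elements of a finite set of Paulis pairwise commute. -/
def SetComm {n : ℕ} (S : Finset (Fin n → Fin 4)) : Prop :=
  ∀ P ∈ S, ∀ Q ∈ S, Commute (Pauli P) (Pauli Q)

/-- Independence for a finite set of Paulis: no element is a product of a subset
of the others, up to sign. -/
def SetIndep {n : ℕ} (S : Finset (Fin n → Fin 4)) : Prop :=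
  ∀ P ∈ S, ∀ T ⊆ S.erase P, ∀ ε : ℂ, (ε = 1 ∨ ε = -1) →
    Pauli P ≠ ε • (T.toList.map Pauli).prod

/-- The layer T^{⊗k₁} ⊗ (T†)^{⊗k₂} ⊗ I^{⊗(n-k₁-k₂)}. -/
def TLayer (n k₁ k₂ : ℕ) : Matrix (Fin n → Fin 2) (Fin n → Fin 2) ℂ :=
  Matrix.diagonal (fun x => ∏ i : Fin n,
    if x i = 1 then
      (if (i : ℕ) < k₁ then Complex.exp (Complex.I * (Real.pi / 4 : ℝ))
       else if (i : ℕ) < k₁ + k₂ then Complex.exp (-(Complex.I * (Real.pi / 4 : ℝ)))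
       else 1)
    else 1)

/-- T-depth at most one: C₁ (T^{⊗k₁} ⊗ T†^{⊗k₂} ⊗ I) C₂ up to global phase. -/
def TDepthAtMostOne (n : ℕ) (U : Matrix (Fin n → Fin 2) (Fin n → Fin 2) ℂ) : Prop :=
  ∃ (k₁ k₂ : ℕ) (C₁ C₂ : Matrix (Fin n → Fin 2) (Fin n → Fin 2) ℂ) (c : ℂ),
    k₁ + k₂ ≤ n ∧ IsClifford C₁ ∧ IsClifford C₂ ∧ ‖c‖ = 1 ∧
    U = c • (C₁ * TLayer n k₁ k₂ * C₂)

/-- T-depth exactly one: as above with at least one T gate. -/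
def TDepthOne (n : ℕ) (U : Matrix (Fin n → Fin 2) (Fin n → Fin 2) ℂ) : Prop :=
  ∃ (k₁ k₂ : ℕ) (C₁ C₂ : Matrix (Fin n → Fin 2) (Fin n → Fin 2) ℂ) (c : ℂ),
    1 ≤ k₁ + k₂ ∧ k₁ + k₂ ≤ n ∧ IsClifford C₁ ∧ IsClifford C₂ ∧ ‖c‖ = 1 ∧
    U = c • (C₁ * TLayer n k₁ k₂ * C₂)

/-!
Both exponential products are diagonal: `exp(iπZ^b/8)` has entry `ζ ^ (-1)^(b·x)` at `x`, with
`ζ = exp(iπ/8)`, so `C = c⁻¹ · diag(ζ ^ φ x)` where `φ x = ∑ₖ (-1)^(aₖ·x) - ∑ₖ (-1)^(x k)`.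
Conjugating `X_j` by a diagonal Clifford gives a Pauli supported on the shifts `x ↦ x + e_j`, and
the entries `f x` of a Pauli along such a shift satisfy `f x * f y = f (x + y) * f 0`. For `C` this
says that the third difference of `φ` along `e_j, x, y` is divisible by 16. That third difference
is `-8` times an integer lift of `∑ₖ aₖⱼ (aₖ·x)(aₖ·y) - x_j y_j`, so this cubic form of the `aₖ`
agrees with that of the standard basis. With `x = y = e_i` this gives `AᵀA = 1`; with `x = a_l`,
`y = a_m` it shows that distinct `aₖ` have disjoint supports, which forces the `aₖ` to be a
permutation of the standard basis. Then `φ = 0` and `C` is a scalar.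
-/

/- Matrix indices are bit strings `Fin n → Fin 2`, on which `Fin 2` only carries its additive
group; dot products with the vectors `a k` are taken in `ZMod 2` through this equivalence. -/
def finTwoAddEquiv : Fin 2 ≃+ ZMod 2 := (ZMod.finEquiv 2).toAddEquiv

def vecZMod (n : ℕ) : (Fin n → Fin 2) ≃+ (Fin n → ZMod 2) :=
  AddEquiv.piCongrRight fun _ => finTwoAddEquiv

theorem vecZMod_single {n : ℕ} (j : Fin n) : vecZMod n (Pi.single j 1) = Pi.single j 1 := by
  ext i
  rcases eq_or_ne i j with rfl | hij
  · simp [vecZMod, finTwoAddEquiv]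
  · simp [vecZMod, hij]

def zsign (s : ZMod 2) : ℤ := if s = 0 then 1 else -1

theorem zsign_add : ∀ s t : ZMod 2, zsign (s + t) = zsign s * zsign t := by decide

theorem zsign_sum {ι : Type*} (s : Finset ι) (f : ι → ZMod 2) :
    zsign (∑ i ∈ s, f i) = ∏ i ∈ s, zsign (f i) := by
  induction s using Finset.cons_induction with
  | empty => rfl
  | cons i s hi ih => rw [Finset.sum_cons, Finset.prod_cons, zsign_add, ih]

theorem P1_ite_apply (s : ZMod 2) (u v : Fin 2) :
    P1 (if s = 1 then 3 else 0) u v = if u = v then (zsign (s * finTwoAddEquiv u) : ℂ) else 0 := by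
  obtain rfl | rfl : s = 0 ∨ s = 1 := by revert s; decide
  all_goals fin_cases u <;> fin_cases v <;> simp [P1, zsign, finTwoAddEquiv, one_apply]

theorem Pauli_zOfZ {n : ℕ} (b : Fin n → ZMod 2) :
    Pauli (zOfZ b) = diagonal fun x => (zsign (b ⬝ᵥ vecZMod n x) : ℂ) := by
  ext x y
  simp only [Pauli, zOfZ, P1_ite_apply, diagonal_apply]
  split_ifs with hxy
  · subst hxy
    simp [dotProduct, zsign_sum, vecZMod]
  · obtain ⟨i, hi⟩ := Function.ne_iff.mp hxy
    exact Finset.prod_eq_zero (Finset.mem_univ i) (if_neg hi)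

def phaseDiag {n : ℕ} (φ : (Fin n → Fin 2) → ℤ) : Matrix (Fin n → Fin 2) (Fin n → Fin 2) ℂ :=
  diagonal fun x => cexp (φ x * (Real.pi * I / 8))

theorem phaseDiag_mul {n : ℕ} (φ ψ : (Fin n → Fin 2) → ℤ) :
    phaseDiag φ * phaseDiag ψ = phaseDiag (φ + ψ) := by
  simp only [phaseDiag, diagonal_mul_diagonal, ← Complex.exp_add, Pi.add_apply, Int.cast_add,
    add_mul]

theorem phaseDiag_zero {n : ℕ} : phaseDiag (0 : (Fin n → Fin 2) → ℤ) = 1 := by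
  simp [phaseDiag]

theorem list_prod_map_phaseDiag {n : ℕ} {ι : Type*} (l : List ι) (φ : ι → (Fin n → Fin 2) → ℤ) :
    (l.map fun k => phaseDiag (φ k)).prod = phaseDiag fun x => (l.map fun k => φ k x).sum := by
  induction l with
  | nil => exact phaseDiag_zero.symm
  | cons k l ih => rw [List.map_cons, List.prod_cons, ih, phaseDiag_mul]; rfl

theorem eq_inv_smul_phaseDiag_sub {n : ℕ} {φ ψ : (Fin n → Fin 2) → ℤ} {c : ℂ}
    {C : Matrix (Fin n → Fin 2) (Fin n → Fin 2) ℂ} (hc : c ≠ 0)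
    (h : phaseDiag φ = c • (phaseDiag ψ * C)) : C = c⁻¹ • phaseDiag (φ - ψ) := by
  have : phaseDiag (φ - ψ) = c • C := by
    rw [sub_eq_neg_add, ← phaseDiag_mul, h, mul_smul_comm, ← mul_assoc, phaseDiag_mul,
      neg_add_cancel, phaseDiag_zero, one_mul]
  rw [this, smul_smul, inv_mul_cancel₀ hc, one_smul]

theorem pexp_zOfZ {n : ℕ} (b : Fin n → ZMod 2) :
    pexp (zOfZ b) = phaseDiag fun x => zsign (b ⬝ᵥ vecZMod n x) := by
  rw [pexp, Pauli_zOfZ, ← diagonal_smul, exp_diagonal, phaseDiag]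
  congr 1
  ext x
  rw [Pi.coe_exp, Pi.smul_apply, smul_eq_mul, ← Complex.exp_eq_exp_ℂ]
  push_cast
  ring_nf

def phaseExp {m n : ℕ} (a : Fin m → Fin n → ZMod 2) (x : Fin n → Fin 2) : ℤ :=
  ∑ k, zsign (a k ⬝ᵥ vecZMod n x)

theorem expProd_zOfZ {m n : ℕ} (a : Fin m → Fin n → ZMod 2) :
    expProd (fun k => zOfZ (a k)) = phaseDiag (phaseExp a) := by
  simp only [expProd, pexp_zOfZ, list_prod_map_phaseDiag, ← Fin.sum_univ_def]
  rfl

theorem phaseExp_comp_equiv {m n : ℕ} (a : Fin m → Fin n → ZMod 2) (σ : Equiv.Perm (Fin m)) :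
    phaseExp (a ∘ σ) = phaseExp a :=
  funext fun x => Equiv.sum_comp σ fun k => zsign (a k ⬝ᵥ vecZMod n x)

theorem zOfZ_single {n : ℕ} (j : Fin n) : zOfZ (Pi.single j 1) = zAt j := by
  ext i
  rcases eq_or_ne i j with rfl | hij
  · simp [zOfZ, zAt]
  · simp [zOfZ, zAt, hij]

theorem P1_apply_add_mul (m : Fin 4) (e u v : Fin 2) :
    P1 m u (u + e) * P1 m v (v + e) = P1 m (u + v) (u + v + e) * P1 m 0 e := by
  fin_cases m <;> fin_cases e <;> fin_cases u <;> fin_cases v <;> simp [P1, one_apply]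

theorem Pauli_apply_add_mul {n : ℕ} (w : Fin n → Fin 4) (e x y : Fin n → Fin 2) :
    Pauli w x (x + e) * Pauli w y (y + e) = Pauli w (x + y) (x + y + e) * Pauli w 0 e := by
  simp only [Pauli, ← Finset.prod_mul_distrib]
  exact Finset.prod_congr rfl fun i _ => P1_apply_add_mul (w i) (e i) (x i) (y i)

theorem Pauli_xAt_apply_add_single {n : ℕ} (j : Fin n) (x : Fin n → Fin 2) :
    Pauli (xAt j) x (x + Pi.single j 1) = 1 := by
  refine Finset.prod_eq_one fun i _ => ?_
  rcases eq_or_ne i j with rfl | hij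
  · simp only [xAt, if_pos, Pi.add_apply, Pi.single_eq_same]
    generalize x i = t
    fin_cases t <;> rfl
  · rw [Pi.add_apply, Pi.single_eq_of_ne hij, add_zero]
    simp [xAt, hij, P1]

theorem diagonal_mul_mul_conjTranspose_apply {ι : Type*} [Fintype ι] [DecidableEq ι]
    (γ : ι → ℂ) (M : Matrix ι ι ℂ) (u v : ι) :
    (diagonal γ * M * (diagonal γ)ᴴ) u v = γ u * M u v * star (γ v) := by
  rw [diagonal_conjTranspose, mul_diagonal, diagonal_mul]
  rfl

theorem IsClifford.shift_mul_of_diagonal {n : ℕ} {γ : (Fin n → Fin 2) → ℂ}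
    (hC : IsClifford (diagonal γ)) (j : Fin n) (x y : Fin n → Fin 2) :
    let f : (Fin n → Fin 2) → ℂ := fun u => γ u * star (γ (u + Pi.single j 1))
    f x * f y = f (x + y) * f 0 := by
  obtain ⟨w, ε, -, hw⟩ := hC.2 (xAt j)
  have hf (u : Fin n → Fin 2) :
      γ u * star (γ (u + Pi.single j 1)) = ε * Pauli w u (u + Pi.single j 1) := by
    have := congrFun (congrFun hw u) (u + Pi.single j 1)
    rwa [diagonal_mul_mul_conjTranspose_apply, Pauli_xAt_apply_add_single, mul_one] at this
  intro f
  simp only [f, hf]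
  rw [zero_add]
  linear_combination ε ^ 2 * Pauli_apply_add_mul w (Pi.single j 1) x y

def thirdDiff {G : Type*} [AddCommGroup G] (φ : G → ℤ) (e x y : G) : ℤ :=
  (φ x - φ (x + e)) + (φ y - φ (y + e)) - (φ (x + y) - φ (x + y + e)) - (φ 0 - φ e)

theorem thirdDiff_sum {G ι : Type*} [AddCommGroup G] (s : Finset ι) (φ : ι → G → ℤ) (e x y : G) :
    thirdDiff (fun u => ∑ k ∈ s, φ k u) e x y = ∑ k ∈ s, thirdDiff (φ k) e x y := by
  simp only [thirdDiff, Finset.sum_sub_distrib, Finset.sum_add_distrib]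

theorem thirdDiff_sub {G : Type*} [AddCommGroup G] (φ ψ : G → ℤ) (e x y : G) :
    thirdDiff (φ - ψ) e x y = thirdDiff φ e x y - thirdDiff ψ e x y := by
  simp only [thirdDiff, Pi.sub_apply]
  ring

theorem sixteen_dvd_of_cexp_eq_one {k : ℤ} (h : cexp (k * (Real.pi * I / 8)) = 1) : 16 ∣ k := by
  have hζ := Complex.isPrimitiveRoot_exp 16 (by norm_num)
  refine mod_cast (hζ.zpow_eq_one_iff_dvd k).mp ?_
  rw [← Complex.exp_int_mul, ← h]
  congr 1
  push_cast
  ring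

theorem IsClifford.sixteen_dvd_thirdDiff {n : ℕ} {φ : (Fin n → Fin 2) → ℤ} {c : ℂ} (hc : c ≠ 0)
    (hC : IsClifford (c • phaseDiag φ)) (j : Fin n) (x y : Fin n → Fin 2) :
    16 ∣ thirdDiff φ (Pi.single j 1) x y := by
  rw [phaseDiag, ← diagonal_smul] at hC
  set θ : ℂ := Real.pi * I / 8
  set D : (Fin n → Fin 2) → ℤ := fun u => φ u - φ (u + Pi.single j 1)
  have hθ : (starRingEnd ℂ) θ = -θ := by
    simp [θ, Complex.conj_ofReal, map_div₀, map_ofNat]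
    ring
  have hf (u : Fin n → Fin 2) : (c • fun x => cexp (φ x * θ)) u *
      star ((c • fun x => cexp (φ x * θ)) (u + Pi.single j 1)) = c * star c * cexp (D u * θ) := by
    simp only [Pi.smul_apply, smul_eq_mul, star_mul', Complex.star_def, ← Complex.exp_conj,
      map_mul, map_intCast, hθ, D]
    rw [mul_mul_mul_comm, ← Complex.exp_add]
    push_cast
    ring_nf
  have hshift := hC.shift_mul_of_diagonal j x y
  simp only [hf] at hshift
  have hκ : (c * star c) ^ 2 ≠ 0 := pow_ne_zero 2 (mul_ne_zero hc (star_ne_zero.mpr hc))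
  have key : cexp (D x * θ) * cexp (D y * θ) = cexp (D (x + y) * θ) * cexp (D 0 * θ) :=
    mul_left_cancel₀ hκ (by linear_combination hshift)
  have hD : thirdDiff φ (Pi.single j 1) x y = D x + D y - D (x + y) - D 0 := by
    simp only [thirdDiff, D, zero_add]
  apply sixteen_dvd_of_cexp_eq_one
  rw [hD, show ((D x + D y - D (x + y) - D 0 : ℤ) : ℂ) * θ =
      (D x * θ + D y * θ) - (D (x + y) * θ + D 0 * θ) by push_cast; ring,
    Complex.exp_sub, Complex.exp_add, Complex.exp_add, key, div_self]
  exact mul_ne_zero (Complex.exp_ne_zero _) (Complex.exp_ne_zero _)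

theorem thirdDiff_zsign : ∀ e s t : ZMod 2, thirdDiff zsign e s t = -8 * ((e * s * t).val : ℤ) := by
  decide

theorem thirdDiff_phaseExp {m n : ℕ} (a : Fin m → Fin n → ZMod 2) (j : Fin n)
    (x y : Fin n → Fin 2) :
    thirdDiff (phaseExp a) (Pi.single j 1) x y =
      -8 * ∑ k, ((a k j * (a k ⬝ᵥ vecZMod n x) * (a k ⬝ᵥ vecZMod n y)).val : ℤ) := by
  unfold phaseExp
  rw [Finset.mul_sum, thirdDiff_sum]
  refine Finset.sum_congr rfl fun k _ => ?_
  simp only [thirdDiff, map_add, map_zero, dotProduct_add, dotProduct_zero, vecZMod_single,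
    dotProduct_single, mul_one]
  exact thirdDiff_zsign _ _ _

def cubicForm {m n : ℕ} (a : Fin m → Fin n → ZMod 2) (j : Fin n) (u v : Fin n → ZMod 2) :
    ZMod 2 :=
  ∑ k, a k j * (a k ⬝ᵥ u) * (a k ⬝ᵥ v)

theorem cubicForm_eq_of_sixteen_dvd {m m' n : ℕ} (a : Fin m → Fin n → ZMod 2)
    (a' : Fin m' → Fin n → ZMod 2) (j : Fin n) (x y : Fin n → Fin 2)
    (h : 16 ∣ thirdDiff (phaseExp a - phaseExp a') (Pi.single j 1) x y) :
    cubicForm a j (vecZMod n x) (vecZMod n y) = cubicForm a' j (vecZMod n x) (vecZMod n y) := by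
  rw [thirdDiff_sub, thirdDiff_phaseExp, thirdDiff_phaseExp, ← mul_sub, neg_mul, dvd_neg,
    show (16 : ℤ) = 8 * 2 by norm_num, mul_dvd_mul_iff_left (by norm_num)] at h
  have h2 := (ZMod.intCast_zmod_eq_zero_iff_dvd _ 2).mpr h
  push_cast [ZMod.natCast_zmod_val] at h2
  exact sub_eq_zero.mp h2

theorem cubicForm_single {n : ℕ} (j : Fin n) (u v : Fin n → ZMod 2) :
    cubicForm (fun k => Pi.single k 1) j u v = u j * v j := by
  simp [cubicForm, Pi.single_apply]

theorem zmod_two_mul_self : ∀ s : ZMod 2, s * s = s := by decide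

theorem zmod_two_eq_one_of_ne_zero : ∀ s : ZMod 2, s ≠ 0 → s = 1 := by decide

section CubicForm

variable {n : ℕ} {a : Fin n → Fin n → ZMod 2}

theorem transpose_mul_self_eq_one_of_cubicForm
    (h : ∀ j u v, cubicForm a j u v = u j * v j) : (of a)ᵀ * of a = 1 := by
  ext j i
  have := h j (Pi.single i 1) (Pi.single i 1)
  simp only [cubicForm, dotProduct_single, mul_one, mul_assoc, zmod_two_mul_self] at this
  simpa [mul_apply, one_apply, Pi.single_apply, eq_comm] using this

theorem dotProduct_eq_ite_of_cubicForm
    (h : ∀ j u v, cubicForm a j u v = u j * v j) (k l : Fin n) :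
    a k ⬝ᵥ a l = if k = l then 1 else 0 := by
  have := mul_eq_one_comm.mp (transpose_mul_self_eq_one_of_cubicForm h)
  simpa [mul_apply, one_apply, dotProduct] using congrFun (congrFun this k) l

theorem mul_eq_zero_of_cubicForm
    (h : ∀ j u v, cubicForm a j u v = u j * v j) {l m : Fin n} (hlm : l ≠ m) (j : Fin n) :
    a l j * a m j = 0 := by
  rw [← h j (a l) (a m), cubicForm]
  refine Finset.sum_eq_zero fun k _ => ?_
  simp only [dotProduct_eq_ite_of_cubicForm h]
  split_ifs <;> simp_all

theorem exists_perm_of_cubicForm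
    (h : ∀ j u v, cubicForm a j u v = u j * v j) :
    ∃ σ : Equiv.Perm (Fin n), ∀ k, a k = Pi.single (σ k) 1 := by
  have hcol (j : Fin n) : ∃ k, a k j = 1 := by
    have := congrFun (congrFun (transpose_mul_self_eq_one_of_cubicForm h) j) j
    simp only [mul_apply, transpose_apply, of_apply, zmod_two_mul_self, one_apply_eq] at this
    obtain ⟨k, -, hk⟩ := Finset.exists_ne_zero_of_sum_ne_zero (this ▸ one_ne_zero)
    exact ⟨k, zmod_two_eq_one_of_ne_zero _ hk⟩
  choose τ hτ using hcol
  have hτ_unique {k i : Fin n} (hki : a k i = 1) : τ i = k := by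
    by_contra hne
    simpa [hki, hτ] using mul_eq_zero_of_cubicForm h hne i
  have hτ_surj : Function.Surjective τ := fun k => by
    have := dotProduct_eq_ite_of_cubicForm h k k
    simp only [dotProduct, zmod_two_mul_self, if_true] at this
    obtain ⟨i, -, hi⟩ := Finset.exists_ne_zero_of_sum_ne_zero (this ▸ one_ne_zero)
    exact ⟨i, hτ_unique (zmod_two_eq_one_of_ne_zero _ hi)⟩
  let σ := (Equiv.ofBijective τ ⟨Finite.injective_iff_surjective.mpr hτ_surj, hτ_surj⟩).symm
  refine ⟨σ, fun k => funext fun i => ?_⟩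
  simp only [σ, Pi.single_apply, Equiv.eq_symm_apply]
  split_ifs with hik
  · exact hik ▸ hτ i
  · by_contra hki
    exact hik (hτ_unique (zmod_two_eq_one_of_ne_zero _ hki))

end CubicForm

theorem diagonal_equality_general (n : ℕ) (a : Fin n → (Fin n → ZMod 2))
    (C : Matrix (Fin n → Fin 2) (Fin n → Fin 2) ℂ) (hC : IsClifford C)
    (h : PhaseEq (expProd (fun k => zOfZ (a k))) (expProd (fun j : Fin n => zAt j) * C)) :
    Set.range (fun k => zOfZ (a k)) = Set.range (fun j : Fin n => zAt j) ∧
    (∃ d : ℂ, ‖d‖ = 1 ∧ C = d • (1 : Matrix (Fin n → Fin 2) (Fin n → Fin 2) ℂ)) := by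
  obtain ⟨c, hc, h⟩ := h
  have hc0 : c ≠ 0 := norm_ne_zero_iff.mp (hc ▸ one_ne_zero)
  let e : Fin n → Fin n → ZMod 2 := fun j => Pi.single j 1
  have hzAt : (fun j : Fin n => zAt j) = fun j => zOfZ (e j) :=
    funext fun j => (zOfZ_single j).symm
  rw [hzAt, expProd_zOfZ, expProd_zOfZ] at h
  have hCφ := eq_inv_smul_phaseDiag_sub hc0 h
  have hcubic (j : Fin n) (u v : Fin n → ZMod 2) : cubicForm a j u v = u j * v j := by
    obtain ⟨x, rfl⟩ := (vecZMod n).surjective u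
    obtain ⟨y, rfl⟩ := (vecZMod n).surjective v
    have h16 := (hCφ ▸ hC).sixteen_dvd_thirdDiff (inv_ne_zero hc0) j x y
    rw [cubicForm_eq_of_sixteen_dvd a e j x y h16, cubicForm_single]
  obtain ⟨σ, hσ⟩ := exists_perm_of_cubicForm hcubic
  obtain rfl : a = e ∘ σ := funext hσ
  refine ⟨?_, c⁻¹, by rw [norm_inv, hc, inv_one], ?_⟩
  · simp only [Function.comp_apply, e, zOfZ_single]
    exact EquivLike.range_comp (fun j => zAt j) σ
  · rw [hCφ, phaseExp_comp_equiv, sub_self, phaseDiag_zero]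

/-- diagonal equality: if Z^{a₁},...,Z^{a_n} with a_k linearly independent
satisfy exp(iπZ^{a₁}/8)···exp(iπZ^{a_n}/8) = exp(iπZ₁/8)···exp(iπZ_n/8)·C up to a global
phase with C Clifford, then {Z^{a₁},...,Z^{a_n}} = {Z₁,...,Z_n} as sets and C is the
identity up to a global phase. -/
theorem diagonal_equality (n : ℕ) (a : Fin n → (Fin n → ZMod 2))
    (ha : LinearIndependent (ZMod 2) a)
    (C : Matrix (Fin n → Fin 2) (Fin n → Fin 2) ℂ) (hC : IsClifford C)
    (h : PhaseEq (expProd (fun k => zOfZ (a k))) (expProd (fun j : Fin n => zAt j) * C)) :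
    Set.range (fun k => zOfZ (a k)) = Set.range (fun j : Fin n => zAt j) ∧
    (∃ d : ℂ, ‖d‖ = 1 ∧ C = d • (1 : Matrix (Fin n → Fin 2) (Fin n → Fin 2) ℂ)) :=
  diagonal_equality_general n a C hC h
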